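/- arXiv:2001.00943 — 4 statements merged into one kernel-verified Lean document; each statement's English description precedes it below -/
import Mathlib

section
/- (Proposition 1, Aissi et al.) For every feasible solution x ∈ Ω and every scenario s ∈ S, the regret of x in s is at most the regret of x in the scenario s(x) induced by x, i.e., r_x^s ≤ r_x^{s(x)}. Consequently, the supremum over all scenarios of the regret of x is attained at s(x), and the robustness cost satisfies R_x = r_x^{s(x)} = c^{s(x)} x − min_{y∈Ω} c^{s(x)} y. -/
open Finset

noncomputable section

/-- The cost of a 0-1 vector `x` in a scenario `s`: `∑ i, s i * x i`. -/
def cost {n : ℕ} (s x : Fin n → ℝ) : ℝ := ∑ i, s i * x i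

/-- `x` is a binary (0-1) vector. -/
def IsBinary {n : ℕ} (x : Fin n → ℝ) : Prop := ∀ i, x i = 0 ∨ x i = 1

/-- The set of scenarios determined by the interval costs `[l i, u i]`. -/
def Scen {n : ℕ} (l u : Fin n → ℝ) : Set (Fin n → ℝ) :=
  {s | ∀ i, l i ≤ s i ∧ s i ≤ u i}

/-- The scenario `s(x)` induced by `x`: `u i` if `x i = 1`, `l i` otherwise. -/
def inducedScen {n : ℕ} (l u x : Fin n → ℝ) : Fin n → ℝ :=
  fun i => if x i = 1 then u i else l i

/-- The regret of `x` in scenario `s`: `c^s x - min_{y ∈ Ω} c^s y`. -/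
def regret {n : ℕ} (Ω : Finset (Fin n → ℝ)) (hΩ : Ω.Nonempty) (s x : Fin n → ℝ) : ℝ :=
  cost s x - Ω.inf' hΩ fun y => cost s y

/-- The robustness cost of `x`: the supremum of its regret over all scenarios. -/
def robCost {n : ℕ} (l u : Fin n → ℝ) (Ω : Finset (Fin n → ℝ)) (hΩ : Ω.Nonempty)
    (x : Fin n → ℝ) : ℝ :=
  sSup ((fun s => regret Ω hΩ s x) '' Scen l u)

/-- The `Γ`-relaxed robustness cost of `x`:
`c^{s(x)} x - min_{y ∈ Γ} c^{s(x)} y`. -/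
def relRobCost {n : ℕ} (l u : Fin n → ℝ) (Γ : Finset (Fin n → ℝ)) (hΓ : Γ.Nonempty)
    (x : Fin n → ℝ) : ℝ :=
  cost (inducedScen l u x) x - Γ.inf' hΓ fun y => cost (inducedScen l u x) y

lemma IsBinary.mem_Icc {n : ℕ} {y : Fin n → ℝ} (hy : IsBinary y) (i : Fin n) :
    y i ∈ Set.Icc 0 1 := by
  rcases hy i with h | h <;> simp [h]

lemma inducedScen_mem_Scen {n : ℕ} {l u : Fin n → ℝ} (hlu : ∀ i, l i ≤ u i) (x : Fin n → ℝ) :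
    inducedScen l u x ∈ Scen l u := by
  intro i
  unfold inducedScen
  split_ifs
  · exact ⟨hlu i, le_rfl⟩
  · exact ⟨le_rfl, hlu i⟩

/-- Coordinatewise, `(s i - s(x) i) * (x i - y i) ≤ 0`: where `x i = 1` the induced scenario
takes the largest cost and `x i - y i ≥ 0`, where `x i = 0` it takes the smallest and
`x i - y i ≤ 0`. -/
lemma cost_sub_le_cost_inducedScen_sub {n : ℕ} {l u s x y : Fin n → ℝ} (hs : s ∈ Scen l u)
    (hx : IsBinary x) (hy : ∀ i, y i ∈ Set.Icc 0 1) :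
    cost s x - cost s y ≤ cost (inducedScen l u x) x - cost (inducedScen l u x) y := by
  simp only [cost, ← Finset.sum_sub_distrib, ← mul_sub]
  refine Finset.sum_le_sum fun i _ => ?_
  obtain ⟨hy0, hy1⟩ := hy i
  obtain ⟨hls, hsu⟩ := hs i
  rcases hx i with hxi | hxi <;> simp only [inducedScen, hxi, if_true, if_neg zero_ne_one]
  · exact mul_le_mul_of_nonpos_right hls (by linarith)
  · exact mul_le_mul_of_nonneg_right hsu (by linarith)

lemma regret_le_regret_inducedScen {n : ℕ} {l u s x : Fin n → ℝ} {Ω : Finset (Fin n → ℝ)}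
    (hΩ : Ω.Nonempty) (hbin : ∀ y ∈ Ω, IsBinary y) (hx : IsBinary x) (hs : s ∈ Scen l u) :
    regret Ω hΩ s x ≤ regret Ω hΩ (inducedScen l u x) x := by
  obtain ⟨y, hy, hy_min⟩ := Finset.exists_mem_eq_inf' hΩ (cost s)
  calc regret Ω hΩ s x = cost s x - cost s y := by rw [regret, hy_min]
    _ ≤ cost (inducedScen l u x) x - cost (inducedScen l u x) y :=
      cost_sub_le_cost_inducedScen_sub hs hx (hbin y hy).mem_Icc
    _ ≤ regret Ω hΩ (inducedScen l u x) x :=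
      sub_le_sub_left (Finset.inf'_le _ hy) _

theorem regret_maximized_at_induced_scenario_general
    {n : ℕ} (l u : Fin n → ℝ)
    (hlu : ∀ i, l i ≤ u i)
    (Ω : Finset (Fin n → ℝ)) (hΩ : Ω.Nonempty) (hbin : ∀ x ∈ Ω, IsBinary x)
    (x : Fin n → ℝ) (hx : x ∈ Ω) :
    (∀ s ∈ Scen l u, regret Ω hΩ s x ≤ regret Ω hΩ (inducedScen l u x) x) ∧
    robCost l u Ω hΩ x = regret Ω hΩ (inducedScen l u x) x ∧
    robCost l u Ω hΩ x
      = cost (inducedScen l u x) x - Ω.inf' hΩ (fun y => cost (inducedScen l u x) y) := by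
  have hmax : ∀ s ∈ Scen l u, regret Ω hΩ s x ≤ regret Ω hΩ (inducedScen l u x) x :=
    fun s hs => regret_le_regret_inducedScen hΩ hbin (hbin x hx) hs
  have hrob : robCost l u Ω hΩ x = regret Ω hΩ (inducedScen l u x) x :=
    IsGreatest.csSup_eq
      ⟨⟨_, inducedScen_mem_Scen hlu x, rfl⟩, Set.forall_mem_image.2 hmax⟩
  exact ⟨hmax, hrob, hrob⟩

/-- Proposition 1, Aissi et al.: for every `x ∈ Ω` and every scenario `s`,
`r_x^s ≤ r_x^{s(x)}`; consequently the robustness cost is attained at `s(x)` and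
`R_x = r_x^{s(x)} = c^{s(x)} x - min_{y ∈ Ω} c^{s(x)} y`. -/
theorem regret_maximized_at_induced_scenario
    {n : ℕ} (hn : 0 < n) (l u : Fin n → ℝ)
    (hl : ∀ i, 0 ≤ l i) (hlu : ∀ i, l i ≤ u i)
    (Ω : Finset (Fin n → ℝ)) (hΩ : Ω.Nonempty) (hbin : ∀ x ∈ Ω, IsBinary x)
    (x : Fin n → ℝ) (hx : x ∈ Ω) :
    (∀ s ∈ Scen l u, regret Ω hΩ s x ≤ regret Ω hΩ (inducedScen l u x) x) ∧
    robCost l u Ω hΩ x = regret Ω hΩ (inducedScen l u x) x ∧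
    robCost l u Ω hΩ x
      = cost (inducedScen l u x) x - Ω.inf' hΩ (fun y => cost (inducedScen l u x) y) :=
  regret_maximized_at_induced_scenario_general l u hlu Ω hΩ hbin x hx
end
end

section
/- (Proposition 4 / prop_conv3) Let Γ ⊆ Ω be nonempty and let x ∈ Ω be a solution whose Γ-relaxed robustness cost is strictly smaller than its robustness cost, i.e., R_x^Γ < R_x. Then every solution y ∈ Ω that minimizes the cost c^{s(x)} y over Ω (i.e., every optimal solution for the induced scenario s(x)) does not belong to Γ; hence solving the separation subproblem produces a new solution y ∈ Ω \ Γ. -/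
/-!
For a binary solution `x`, the induced scenario `s(x)` is a worst case, so
`R_x = c^{s(x)} x - min_{y ∈ Ω} c^{s(x)} y`. If some minimizer of `c^{s(x)}` over `Ω` lay in `Γ`,
the minimum over `Γ` could not exceed the minimum over `Ω`, forcing `R_x ≤ R_x^Γ`.
-/

open Finset

noncomputable section

/-- Coordinatewise, `s(x)` charges the most where `x` pays and `y` does not, and the least
where `y` pays and `x` does not. -/
lemma cost_sub_cost_le_inducedScen {n : ℕ} {l u s x y : Fin n → ℝ} (hx : IsBinary x)
    (hy : IsBinary y) (hs : s ∈ Scen l u) :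
    cost s x - cost s y ≤ cost (inducedScen l u x) x - cost (inducedScen l u x) y := by
  simp only [cost, ← Finset.sum_sub_distrib]
  refine Finset.sum_le_sum fun i _ => ?_
  obtain ⟨hls, hsu⟩ := hs i
  unfold inducedScen
  rcases hx i with hxi | hxi <;> rcases hy i with hyi | hyi <;>
    simp only [hxi, hyi, if_pos, if_neg zero_ne_one, mul_zero, mul_one] <;> linarith

theorem robCost_eq_regret_inducedScen {n : ℕ} {l u x : Fin n → ℝ} (hlu : ∀ i, l i ≤ u i)
    {Ω : Finset (Fin n → ℝ)} (hΩ : Ω.Nonempty) (hbin : ∀ y ∈ Ω, IsBinary y) (hx : IsBinary x) :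
    robCost l u Ω hΩ x = regret Ω hΩ (inducedScen l u x) x := by
  have hmem : regret Ω hΩ (inducedScen l u x) x ∈ (fun s => regret Ω hΩ s x) '' Scen l u :=
    ⟨_, inducedScen_mem_Scen hlu x, rfl⟩
  have hbound : ∀ r ∈ (fun s => regret Ω hΩ s x) '' Scen l u,
      r ≤ regret Ω hΩ (inducedScen l u x) x := by
    rintro r ⟨s, hs, rfl⟩
    exact regret_le_regret_inducedScen hΩ hbin hx hs
  exact le_antisymm (csSup_le ⟨_, hmem⟩ hbound) (le_csSup ⟨_, hbound⟩ hmem)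

lemma regret_le_relRobCost_of_mem {n : ℕ} {l u x y : Fin n → ℝ} {Ω Γ : Finset (Fin n → ℝ)}
    (hΩ : Ω.Nonempty) (hΓ : Γ.Nonempty) (hyΓ : y ∈ Γ)
    (hmin : ∀ z ∈ Ω, cost (inducedScen l u x) y ≤ cost (inducedScen l u x) z) :
    regret Ω hΩ (inducedScen l u x) x ≤ relRobCost l u Γ hΓ x := by
  have hinf : Γ.inf' hΓ (fun z => cost (inducedScen l u x) z) ≤
      Ω.inf' hΩ fun z => cost (inducedScen l u x) z :=
    (Γ.inf'_le _ hyΓ).trans (Ω.le_inf' hΩ _ hmin)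
  unfold regret relRobCost
  linarith

theorem separation_gives_new_cut_general
    {n : ℕ} (l u : Fin n → ℝ)
    (hlu : ∀ i, l i ≤ u i)
    (Ω : Finset (Fin n → ℝ)) (hΩ : Ω.Nonempty) (hbin : ∀ x ∈ Ω, IsBinary x)
    (Γ : Finset (Fin n → ℝ)) (hΓ : Γ.Nonempty)
    (x : Fin n → ℝ) (hx : x ∈ Ω)
    (hlt : relRobCost l u Γ hΓ x < robCost l u Ω hΩ x) :
    (∀ y ∈ Ω, (∀ z ∈ Ω, cost (inducedScen l u x) y ≤ cost (inducedScen l u x) z) →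
      y ∉ Γ) ∧
    (∃ y ∈ Ω, y ∉ Γ ∧
      ∀ z ∈ Ω, cost (inducedScen l u x) y ≤ cost (inducedScen l u x) z) := by
  have hrob := robCost_eq_regret_inducedScen hlu hΩ hbin (hbin x hx)
  have hnotMem : ∀ y ∈ Ω, (∀ z ∈ Ω, cost (inducedScen l u x) y ≤ cost (inducedScen l u x) z) →
      y ∉ Γ := fun y _ hmin hyΓ =>
    (regret_le_relRobCost_of_mem hΩ hΓ hyΓ hmin).not_gt (hrob ▸ hlt)
  obtain ⟨y, hyΩ, hmin⟩ := Ω.exists_min_image (fun z => cost (inducedScen l u x) z) hΩ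
  exact ⟨hnotMem, y, hyΩ, hnotMem y hyΩ hmin, hmin⟩

/-- Proposition 4 / prop_conv3: if `R_x^Γ < R_x`, then every
minimizer `y ∈ Ω` of `c^{s(x)} y` over `Ω` lies outside `Γ`; hence the separation
subproblem produces a new solution `y ∈ Ω \ Γ`. -/
theorem separation_gives_new_cut
    {n : ℕ} (hn : 0 < n) (l u : Fin n → ℝ)
    (hl : ∀ i, 0 ≤ l i) (hlu : ∀ i, l i ≤ u i)
    (Ω : Finset (Fin n → ℝ)) (hΩ : Ω.Nonempty) (hbin : ∀ x ∈ Ω, IsBinary x)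
    (Γ : Finset (Fin n → ℝ)) (hΓ : Γ.Nonempty) (hΓΩ : Γ ⊆ Ω)
    (x : Fin n → ℝ) (hx : x ∈ Ω)
    (hlt : relRobCost l u Γ hΓ x < robCost l u Ω hΩ x) :
    (∀ y ∈ Ω, (∀ z ∈ Ω, cost (inducedScen l u x) y ≤ cost (inducedScen l u x) z) →
      y ∉ Γ) ∧
    (∃ y ∈ Ω, y ∉ Γ ∧
      ∀ z ∈ Ω, cost (inducedScen l u x) y ≤ cost (inducedScen l u x) z) :=
  separation_gives_new_cut_general l u hlu Ω hΩ hbin Γ hΓ x hx hlt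
end
end

section
/- (Correctness of the stopping condition) Let Γ ⊆ Ω be nonempty and let x* ∈ Ω be a Γ-relaxed robust solution, i.e., x* minimizes R_x^Γ over all x ∈ Ω. If R_{x*}^Γ ≥ R_{x*}, then x* is a robust solution, i.e., x* minimizes the robustness cost R_x over all x ∈ Ω, and moreover R_{x*}^Γ = R_{x*}. -/
open Finset

noncomputable section

/-!
Every `x` satisfies `R_x^Γ ≤ R_x`: the induced scenario `s(x)` is one of the scenarios over which
`R_x` is a supremum (a finite one, as the regret is continuous on the compact box of
scenarios), and `Γ ⊆ Ω` makes the minimum over `Γ` at least the minimum over `Ω`. The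
stopping condition therefore forces `R_{x*}^Γ = R_{x*}`, and for every `x ∈ Ω`,
`R_{x*} = R_{x*}^Γ ≤ R_x^Γ ≤ R_x`.
-/

section

variable {n : ℕ}

theorem isCompact_scen (l u : Fin n → ℝ) : IsCompact (Scen l u) := by
  have hbox : Scen l u = Set.univ.pi fun i => Set.Icc (l i) (u i) := by
    ext s
    simp only [Scen, Set.mem_ofPred_eq, Set.mem_pi, Set.mem_univ, Set.mem_Icc, forall_const]
  rw [hbox]
  exact isCompact_univ_pi fun i => isCompact_Icc

theorem continuous_cost_left (x : Fin n → ℝ) : Continuous fun s : Fin n → ℝ => cost s x := by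
  unfold cost
  fun_prop

theorem continuous_regret (Ω : Finset (Fin n → ℝ)) (hΩ : Ω.Nonempty) (x : Fin n → ℝ) :
    Continuous fun s => regret Ω hΩ s x :=
  (continuous_cost_left x).sub
    (Continuous.finset_inf'_apply hΩ fun y _ => continuous_cost_left y)

theorem regret_le_robCost {l u : Fin n → ℝ} {s : Fin n → ℝ} (hs : s ∈ Scen l u)
    (Ω : Finset (Fin n → ℝ)) (hΩ : Ω.Nonempty) (x : Fin n → ℝ) :
    regret Ω hΩ s x ≤ robCost l u Ω hΩ x :=
  le_csSup ((isCompact_scen l u).bddAbove_image (continuous_regret Ω hΩ x).continuousOn)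
    ⟨s, hs, rfl⟩

theorem inducedScen_mem_scen {l u : Fin n → ℝ} (hlu : ∀ i, l i ≤ u i) (x : Fin n → ℝ) :
    inducedScen l u x ∈ Scen l u := by
  intro i
  unfold inducedScen
  split_ifs
  · exact ⟨hlu i, le_rfl⟩
  · exact ⟨le_rfl, hlu i⟩

theorem relRobCost_le_regret_inducedScen (l u : Fin n → ℝ) {Γ Ω : Finset (Fin n → ℝ)}
    (hΓ : Γ.Nonempty) (hΩ : Ω.Nonempty) (hΓΩ : Γ ⊆ Ω) (x : Fin n → ℝ) :
    relRobCost l u Γ hΓ x ≤ regret Ω hΩ (inducedScen l u x) x := by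
  unfold relRobCost regret
  exact sub_le_sub_left (Finset.inf'_mono _ hΓΩ hΓ) _

theorem relRobCost_le_robCost {l u : Fin n → ℝ} (hlu : ∀ i, l i ≤ u i)
    {Γ Ω : Finset (Fin n → ℝ)} (hΓ : Γ.Nonempty) (hΩ : Ω.Nonempty) (hΓΩ : Γ ⊆ Ω)
    (x : Fin n → ℝ) :
    relRobCost l u Γ hΓ x ≤ robCost l u Ω hΩ x :=
  (relRobCost_le_regret_inducedScen l u hΓ hΩ hΓΩ x).trans
    (regret_le_robCost (inducedScen_mem_scen hlu x) Ω hΩ x)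

end

theorem stopping_condition_correct_general
    {n : ℕ} (l u : Fin n → ℝ)
    (hlu : ∀ i, l i ≤ u i)
    (Ω : Finset (Fin n → ℝ)) (hΩ : Ω.Nonempty)
    (Γ : Finset (Fin n → ℝ)) (hΓ : Γ.Nonempty) (hΓΩ : Γ ⊆ Ω)
    (xstar : Fin n → ℝ)
    (hmin : ∀ x ∈ Ω, relRobCost l u Γ hΓ xstar ≤ relRobCost l u Γ hΓ x)
    (hstop : robCost l u Ω hΩ xstar ≤ relRobCost l u Γ hΓ xstar) :
    (∀ x ∈ Ω, robCost l u Ω hΩ xstar ≤ robCost l u Ω hΩ x) ∧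
    relRobCost l u Γ hΓ xstar = robCost l u Ω hΩ xstar := by
  have heq : relRobCost l u Γ hΓ xstar = robCost l u Ω hΩ xstar :=
    le_antisymm (relRobCost_le_robCost hlu hΓ hΩ hΓΩ xstar) hstop
  refine ⟨fun x hx => ?_, heq⟩
  calc robCost l u Ω hΩ xstar = relRobCost l u Γ hΓ xstar := heq.symm
    _ ≤ relRobCost l u Γ hΓ x := hmin x hx
    _ ≤ robCost l u Ω hΩ x := relRobCost_le_robCost hlu hΓ hΩ hΓΩ x

/-- correctness of the stopping condition: if `x*` is a
`Γ`-relaxed robust solution and `R_{x*}^Γ ≥ R_{x*}`, then `x*` is a robust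
solution and `R_{x*}^Γ = R_{x*}`. -/
theorem stopping_condition_correct
    {n : ℕ} (hn : 0 < n) (l u : Fin n → ℝ)
    (hl : ∀ i, 0 ≤ l i) (hlu : ∀ i, l i ≤ u i)
    (Ω : Finset (Fin n → ℝ)) (hΩ : Ω.Nonempty) (hbin : ∀ x ∈ Ω, IsBinary x)
    (Γ : Finset (Fin n → ℝ)) (hΓ : Γ.Nonempty) (hΓΩ : Γ ⊆ Ω)
    (xstar : Fin n → ℝ) (hxstar : xstar ∈ Ω)
    (hmin : ∀ x ∈ Ω, relRobCost l u Γ hΓ xstar ≤ relRobCost l u Γ hΓ x)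
    (hstop : robCost l u Ω hΩ xstar ≤ relRobCost l u Γ hΓ xstar) :
    (∀ x ∈ Ω, robCost l u Ω hΩ xstar ≤ robCost l u Ω hΩ x) ∧
    relRobCost l u Γ hΓ xstar = robCost l u Ω hΩ xstar :=
  stopping_condition_correct_general l u hlu Ω hΩ Γ hΓ hΓΩ xstar hmin hstop
end
end

section
/- (Theorem: finite optimal convergence of the logic-based Benders' algorithm) Consider sequences (Γ_ψ)_{ψ≥1}, (x_ψ)_{ψ≥1}, (y_ψ)_{ψ≥1} defined as follows: Γ_1 ⊆ Ω is nonempty; for each ψ ≥ 1, x_ψ ∈ Ω is a Γ_ψ-relaxed robust solution (a minimizer of R_x^{Γ_ψ} over x ∈ Ω), y_ψ ∈ Ω is a minimizer of c^{s(x_ψ)} y over y ∈ Ω, and Γ_{ψ+1} = Γ_ψ ∪ {y_ψ}. Then there exists an iteration ψ with ψ ≤ |Ω| − |Γ_1| + 1 at which the stopping condition R_{x_ψ}^{Γ_ψ} ≥ R_{x_ψ} holds, and at any such iteration x_ψ is a robust solution, i.e., x_ψ minimizes the robustness cost R_x over all x ∈ Ω. -/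
open Finset

noncomputable section

lemma cost_sub_le_key {n : ℕ} {l u : Fin n → ℝ} (hlu : ∀ i, l i ≤ u i)
    {x y s : Fin n → ℝ} (hx : IsBinary x) (hy : IsBinary y) (hs : s ∈ Scen l u) :
    cost s x - cost s y ≤ cost (inducedScen l u x) x - cost (inducedScen l u x) y := by
  simp only [cost, ← Finset.sum_sub_distrib]
  apply Finset.sum_le_sum
  intro i _
  have hsi := hs i
  rcases hx i with h1 | h1 <;> rcases hy i with h2 | h2 <;>
    simp only [inducedScen, h1, h2, if_true] <;> norm_num <;> nlinarith [hlu i, hsi.1, hsi.2]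

lemma inducedScen_mem {n : ℕ} (l u x : Fin n → ℝ) (hlu : ∀ i, l i ≤ u i) :
    inducedScen l u x ∈ Scen l u := by
  intro i
  unfold inducedScen
  split
  · exact ⟨hlu i, le_refl _⟩
  · exact ⟨le_refl _, hlu i⟩

lemma regret_le_induced {n : ℕ} {l u : Fin n → ℝ} (hlu : ∀ i, l i ≤ u i)
    (Ω : Finset (Fin n → ℝ)) (hΩ : Ω.Nonempty) (hbin : ∀ z ∈ Ω, IsBinary z)
    {x : Fin n → ℝ} (hxb : IsBinary x) {s : Fin n → ℝ} (hs : s ∈ Scen l u) :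
    regret Ω hΩ s x ≤ regret Ω hΩ (inducedScen l u x) x := by
  obtain ⟨w, hw, hweq⟩ := Finset.exists_mem_eq_inf' hΩ (fun y => cost s y)
  unfold regret
  rw [hweq]
  have h1 : Ω.inf' hΩ (fun y => cost (inducedScen l u x) y) ≤ cost (inducedScen l u x) w :=
    Finset.inf'_le _ hw
  have h2 := cost_sub_le_key hlu hxb (hbin w hw) hs
  linarith

lemma robCost_eq_induced {n : ℕ} {l u : Fin n → ℝ} (hlu : ∀ i, l i ≤ u i)
    (Ω : Finset (Fin n → ℝ)) (hΩ : Ω.Nonempty) (hbin : ∀ z ∈ Ω, IsBinary z)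
    {x : Fin n → ℝ} (hxb : IsBinary x) :
    robCost l u Ω hΩ x = regret Ω hΩ (inducedScen l u x) x := by
  have hmem := inducedScen_mem l u x hlu
  apply le_antisymm
  · apply csSup_le ⟨_, Set.mem_image_of_mem _ hmem⟩
    rintro r ⟨s, hs, rfl⟩
    exact regret_le_induced hlu Ω hΩ hbin hxb hs
  · refine le_csSup ⟨regret Ω hΩ (inducedScen l u x) x, ?_⟩ (Set.mem_image_of_mem _ hmem)
    rintro r ⟨s, hs, rfl⟩
    exact regret_le_induced hlu Ω hΩ hbin hxb hs

lemma relRob_le_rob {n : ℕ} {l u : Fin n → ℝ} (hlu : ∀ i, l i ≤ u i)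
    (Ω : Finset (Fin n → ℝ)) (hΩ : Ω.Nonempty) (hbin : ∀ z ∈ Ω, IsBinary z)
    (Γ : Finset (Fin n → ℝ)) (hΓ : Γ.Nonempty) (hΓΩ : Γ ⊆ Ω)
    {z : Fin n → ℝ} (hz : z ∈ Ω) :
    relRobCost l u Γ hΓ z ≤ robCost l u Ω hΩ z := by
  have h1 : Ω.inf' hΩ (fun y => cost (inducedScen l u z) y)
      ≤ Γ.inf' hΓ (fun y => cost (inducedScen l u z) y) :=
    Finset.le_inf' _ _ fun b hb => Finset.inf'_le _ (hΓΩ hb)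
  have h2 := robCost_eq_induced hlu Ω hΩ hbin (hbin z hz)
  unfold relRobCost
  unfold regret at h2
  linarith

/-- finite optimal convergence of the logic-based Benders'
algorithm: along the iterations `Γ_{ψ+1} = Γ_ψ ∪ {y_ψ}`, where `x_ψ` is a
`Γ_ψ`-relaxed robust solution and `y_ψ` is optimal for the induced scenario
`s(x_ψ)`, the stopping condition `R_{x_ψ}^{Γ_ψ} ≥ R_{x_ψ}` holds at some
iteration `ψ ≤ |Ω| - |Γ_1| + 1`, and at any such iteration `x_ψ` is robust. -/
theorem benders_finite_convergence
    {n : ℕ} (hn : 0 < n) (l u : Fin n → ℝ)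
    (hl : ∀ i, 0 ≤ l i) (hlu : ∀ i, l i ≤ u i)
    (Ω : Finset (Fin n → ℝ)) (hΩ : Ω.Nonempty) (hbin : ∀ x ∈ Ω, IsBinary x)
    (Γ : ℕ → Finset (Fin n → ℝ)) (x y : ℕ → Fin n → ℝ)
    (hΓ1 : (Γ 1).Nonempty) (hΓ1Ω : Γ 1 ⊆ Ω)
    (hΓne : ∀ ψ, 1 ≤ ψ → (Γ ψ).Nonempty)
    (hx : ∀ ψ (hψ : 1 ≤ ψ), x ψ ∈ Ω ∧
      ∀ z ∈ Ω, relRobCost l u (Γ ψ) (hΓne ψ hψ) (x ψ)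
        ≤ relRobCost l u (Γ ψ) (hΓne ψ hψ) z)
    (hy : ∀ ψ, 1 ≤ ψ → y ψ ∈ Ω ∧
      ∀ z ∈ Ω, cost (inducedScen l u (x ψ)) (y ψ) ≤ cost (inducedScen l u (x ψ)) z)
    (hΓsucc : ∀ ψ, 1 ≤ ψ → Γ (ψ + 1) = Γ ψ ∪ {y ψ}) :
    (∃ ψ, ∃ hψ : 1 ≤ ψ, ψ ≤ Ω.card - (Γ 1).card + 1 ∧
      robCost l u Ω hΩ (x ψ) ≤ relRobCost l u (Γ ψ) (hΓne ψ hψ) (x ψ)) ∧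
    (∀ ψ (hψ : 1 ≤ ψ),
      robCost l u Ω hΩ (x ψ) ≤ relRobCost l u (Γ ψ) (hΓne ψ hψ) (x ψ) →
      ∀ z ∈ Ω, robCost l u Ω hΩ (x ψ) ≤ robCost l u Ω hΩ z) := by
  -- Γ ψ ⊆ Ω for all ψ ≥ 1
  have hΓΩ : ∀ ψ, 1 ≤ ψ → Γ ψ ⊆ Ω := by
    intro ψ hψ
    induction ψ, hψ using Nat.le_induction with
    | base => exact hΓ1Ω
    | succ k hk ih =>
      rw [hΓsucc k hk]
      exact Finset.union_subset ih (Finset.singleton_subset_iff.2 (hy k hk).1)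
  -- inf over Ω at induced scenario equals cost of y ψ
  have hinf : ∀ ψ, 1 ≤ ψ →
      (Ω.inf' hΩ fun z => cost (inducedScen l u (x ψ)) z)
        = cost (inducedScen l u (x ψ)) (y ψ) := by
    intro ψ hψ
    exact le_antisymm (Finset.inf'_le _ (hy ψ hψ).1)
      (Finset.le_inf' _ _ fun z hz => (hy ψ hψ).2 z hz)
  constructor
  · -- existence of a stopping iteration
    by_contra hcon
    push_neg at hcon
    set N := Ω.card - (Γ 1).card + 1 with hN
    have key : ∀ k, 1 ≤ k → k ≤ N + 1 → (Γ 1).card + (k - 1) ≤ (Γ k).card := by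
      intro k hk
      induction k, hk using Nat.le_induction with
      | base => intro _; simp
      | succ k hk ih =>
        intro hkN
        have hkN' : k ≤ N := by omega
        have hstop := hcon k hk hkN'
        -- robCost (x k) = cost s(x k) (x k) - cost s(x k) (y k)
        have hrob : robCost l u Ω hΩ (x k)
            = cost (inducedScen l u (x k)) (x k) - cost (inducedScen l u (x k)) (y k) := by
          rw [robCost_eq_induced hlu Ω hΩ hbin (hbin _ (hx k hk).1)]
          unfold regret
          rw [hinf k hk]
        have hyn : y k ∉ Γ k := by
          intro hmem
          have h1 : (Γ k).inf' (hΓne k hk) (fun z => cost (inducedScen l u (x k)) z)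
              ≤ cost (inducedScen l u (x k)) (y k) := Finset.inf'_le _ hmem
          have h2 : robCost l u Ω hΩ (x k) ≤ relRobCost l u (Γ k) (hΓne k hk) (x k) := by
            unfold relRobCost
            rw [hrob]
            linarith
          exact absurd h2 (not_le.2 hstop)
        have hcard : (Γ (k + 1)).card = (Γ k).card + 1 := by
          rw [hΓsucc k hk, Finset.union_comm, ← Finset.insert_eq,
            Finset.card_insert_of_notMem hyn]
        have := ih (by omega)
        omega
    have h1 := key (N + 1) (by omega) (le_refl _)
    have h2 : (Γ (N + 1)).card ≤ Ω.card := Finset.card_le_card (hΓΩ (N + 1) (by omega))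
    have h3 : (Γ 1).card ≤ Ω.card := Finset.card_le_card hΓ1Ω
    have h4 : 1 ≤ (Γ 1).card := Finset.card_pos.2 hΓ1
    omega
  · -- at any stopping iteration, x ψ is robust
    intro ψ hψ hstop z hz
    have h1 := (hx ψ hψ).2 z hz
    have h2 : relRobCost l u (Γ ψ) (hΓne ψ hψ) z ≤ robCost l u Ω hΩ z :=
      relRob_le_rob hlu Ω hΩ hbin (Γ ψ) (hΓne ψ hψ) (hΓΩ ψ hψ) hz
    linarith
end
end
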